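/- arXiv:1611.08574 — 10 statements merged into one kernel-verified Lean document; each statement's English description precedes it below -/
import Mathlib

section
/- Partial-cover threshold lemma: Let f : Finset V → ℝ be monotone and submodular, let Q > 0 and c ≥ 1 be real numbers, and let S* ⊆ V be a nonempty finite set with f(S*) ≥ Q. If S ⊆ V is a finite set such that every w ∈ S* \ S satisfies Δ(w|S) < Q/(c·|S*|), then f(S) ≥ (1 − 1/c)·Q. -/
/-- The marginal gain `Δ(e|S) = f(S ∪ {e}) − f(S)`. -/
def marginal {V : Type*} [DecidableEq V] (f : Finset V → ℝ) (e : V) (S : Finset V) : ℝ :=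
  f (insert e S) - f S

/-- `f` is monotone: `f(A) ≤ f(B)` whenever `A ⊆ B`. -/
def IsMonotoneFn {V : Type*} (f : Finset V → ℝ) : Prop :=
  ∀ A B : Finset V, A ⊆ B → f A ≤ f B

/-- `f` is submodular: `Δ(e|B) ≤ Δ(e|A)` whenever `A ⊆ B` and `e ∉ B`. -/
def IsSubmodularFn {V : Type*} [DecidableEq V] (f : Finset V → ℝ) : Prop :=
  ∀ A B : Finset V, A ⊆ B → ∀ e : V, e ∉ B → marginal f e B ≤ marginal f e A

lemma union_bound {V : Type*} [DecidableEq V] (f : Finset V → ℝ)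
    (hsub : IsSubmodularFn f) (S : Finset V) :
    ∀ T : Finset V, f (S ∪ T) - f S ≤ ∑ w ∈ T \ S, marginal f w S := by
  intro T
  induction T using Finset.induction_on with
  | empty => simp
  | @insert a T ha ih =>
    by_cases haS : a ∈ S
    · have h1 : S ∪ insert a T = S ∪ T := by
        ext x
        simp only [Finset.mem_union, Finset.mem_insert]
        constructor
        · rintro (h | h | h) <;> simp_all
        · tauto
      have h2 : insert a T \ S = T \ S := by
        ext x
        simp only [Finset.mem_sdiff, Finset.mem_insert]
        constructor
        · rintro ⟨h | h, h2⟩ <;> simp_all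
        · rintro ⟨h, h2⟩; exact ⟨Or.inr h, h2⟩
      rw [h1, h2]; exact ih
    · have h2 : insert a T \ S = insert a (T \ S) := by
        ext x
        simp only [Finset.mem_sdiff, Finset.mem_insert]
        constructor
        · rintro ⟨h | h, h2⟩ <;> simp_all
        · rintro (h | ⟨h, h2⟩) <;> simp_all
      have hnotin : a ∉ T \ S := by simp [ha]
      rw [h2, Finset.sum_insert hnotin]
      have h1 : S ∪ insert a T = insert a (S ∪ T) := by
        ext x; simp only [Finset.mem_union, Finset.mem_insert]; tauto
      rw [h1]
      have haST : a ∉ S ∪ T := by simp [haS, ha]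
      have := hsub S (S ∪ T) Finset.subset_union_left a haST
      unfold marginal at this ih ⊢
      linarith

/-- Partial-cover threshold lemma: if every element of `S* \ S` has marginal gain with
respect to `S` smaller than `Q/(c·|S*|)`, then `f(S) ≥ (1 − 1/c)·Q`. -/
theorem partial_cover_threshold
    {V : Type*} [Fintype V] [DecidableEq V] (f : Finset V → ℝ)
    (hmono : IsMonotoneFn f) (hsub : IsSubmodularFn f)
    (Q c : ℝ) (hQ : 0 < Q) (hc : 1 ≤ c)
    (Sstar : Finset V) (hne : Sstar.Nonempty) (hcov : Q ≤ f Sstar)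
    (S : Finset V)
    (hsmall : ∀ w ∈ Sstar \ S, marginal f w S < Q / (c * Sstar.card)) :
    (1 - 1 / c) * Q ≤ f S := by
  have hc0 : (0:ℝ) < c := lt_of_lt_of_le one_pos hc
  have hcard : (0:ℝ) < (Sstar.card : ℝ) := by
    exact_mod_cast Finset.card_pos.mpr hne
  have hb : (0:ℝ) < Q / (c * Sstar.card) := by positivity
  have h1 : f Sstar ≤ f (S ∪ Sstar) :=
    hmono _ _ Finset.subset_union_right
  have h2 := union_bound f hsub S Sstar
  have h3 : ∑ w ∈ Sstar \ S, marginal f w S ≤ (Sstar \ S).card * (Q / (c * Sstar.card)) := by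
    calc ∑ w ∈ Sstar \ S, marginal f w S
        ≤ ∑ _w ∈ Sstar \ S, Q / (c * Sstar.card) :=
          Finset.sum_le_sum fun w hw => (hsmall w hw).le
      _ = (Sstar \ S).card * (Q / (c * Sstar.card)) := by
          rw [Finset.sum_const, nsmul_eq_mul]
  have h4 : ((Sstar \ S).card : ℝ) ≤ (Sstar.card : ℝ) := by
    exact_mod_cast Finset.card_le_card (Finset.sdiff_subset)
  have h5 : ((Sstar \ S).card : ℝ) * (Q / (c * Sstar.card)) ≤ Q / c := by
    have : (Sstar.card : ℝ) * (Q / (c * Sstar.card)) = Q / c := by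
      field_simp
    nlinarith
  have : Q - Q / c ≤ f S := by linarith
  have : (1 - 1 / c) * Q = Q - Q / c := by ring
  linarith
end

section
/- Thresholding stream invariant (utility of accepted elements): Let f : Finset V → ℝ be normalized (f(∅) = 0), let τ ≥ 0 be a real number and N a natural number. Then for every list L of elements of V, the output S = T_f(L, τ, N) satisfies f(S) ≥ |S|·τ. In particular, if |S| = N then f(S) ≥ N·τ. -/
open scoped Classical

/-- The thresholding stream output `T_f(L, τ, N)`: fold over the list `L` starting from `∅`;
when processing `e` with current set `S`, add `e` if `Δ(e|S) ≥ τ` and `|S| < N`. -/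
noncomputable def tstream {V : Type*} [DecidableEq V]
    (f : Finset V → ℝ) (τ : ℝ) (N : ℕ) (L : List V) : Finset V :=
  L.foldl (fun S e => if marginal f e S ≥ τ ∧ S.card < N then insert e S else S) ∅

/-! Each accepted element raises `f` by at least `τ` and the cardinality by at most one, so
`|S|·τ ≤ f(S)` holds for `S = ∅` and survives every step of the stream. -/

section

variable {V : Type*} [DecidableEq V] (f : Finset V → ℝ) (τ : ℝ) (N : ℕ)

noncomputable def tstreamStep (S : Finset V) (e : V) : Finset V :=
  if marginal f e S ≥ τ ∧ S.card < N then insert e S else S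

theorem tstream_eq_foldl_tstreamStep (L : List V) :
    tstream f τ N L = L.foldl (tstreamStep f τ N) ∅ :=
  rfl

variable {f τ}

theorem add_marginal (e : V) (S : Finset V) : f S + marginal f e S = f (insert e S) :=
  add_sub_cancel _ _

theorem card_mul_le_tstreamStep (hτ : 0 ≤ τ) {S : Finset V} (hS : (S.card : ℝ) * τ ≤ f S)
    (e : V) : ((tstreamStep f τ N S e).card : ℝ) * τ ≤ f (tstreamStep f τ N S e) := by
  unfold tstreamStep
  split_ifs with hacc
  · have hcard : ((insert e S).card : ℝ) ≤ S.card + 1 := by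
      exact_mod_cast Finset.card_insert_le e S
    calc ((insert e S).card : ℝ) * τ ≤ (S.card + 1) * τ := by gcongr
      _ = S.card * τ + τ := by ring
      _ ≤ f S + marginal f e S := add_le_add hS hacc.1
      _ = f (insert e S) := add_marginal e S
  · exact hS

theorem card_mul_le_tstream (h0 : f ∅ = 0) (hτ : 0 ≤ τ) (L : List V) :
    ((tstream f τ N L).card : ℝ) * τ ≤ f (tstream f τ N L) := by
  rw [tstream_eq_foldl_tstreamStep]
  exact L.foldlRecOn (motive := fun S => (S.card : ℝ) * τ ≤ f S) (tstreamStep f τ N)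
    (by simp [h0]) fun S hS e _ => card_mul_le_tstreamStep N hτ hS e

end

theorem tstream_utility_ge_card_mul_threshold_general
    {V : Type*} [DecidableEq V] (f : Finset V → ℝ)
    (h0 : f ∅ = 0) (τ : ℝ) (hτ : 0 ≤ τ) (N : ℕ) (L : List V) :
    ((tstream f τ N L).card : ℝ) * τ ≤ f (tstream f τ N L) ∧
      ((tstream f τ N L).card = N → (N : ℝ) * τ ≤ f (tstream f τ N L)) :=
  ⟨card_mul_le_tstream N h0 hτ L, fun hN => by
    simpa only [hN] using card_mul_le_tstream N h0 hτ L⟩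

/-- Thresholding stream invariant: if `f(∅) = 0` and `τ ≥ 0`, then the output
`S = T_f(L, τ, N)` satisfies `f(S) ≥ |S|·τ`; in particular `|S| = N` implies `f(S) ≥ N·τ`. -/
theorem tstream_utility_ge_card_mul_threshold
    {V : Type*} [Fintype V] [DecidableEq V] (f : Finset V → ℝ)
    (h0 : f ∅ = 0) (τ : ℝ) (hτ : 0 ≤ τ) (N : ℕ) (L : List V) :
    ((tstream f τ N L).card : ℝ) * τ ≤ f (tstream f τ N L) ∧
      ((tstream f τ N L).card = N → (N : ℝ) * τ ≤ f (tstream f τ N L)) :=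
  tstream_utility_ge_card_mul_threshold_general f h0 τ hτ N L
end

section
/- Main theorem on ESC-Streaming (Theorem 3 of the paper): Let f : Finset V → ℝ be normalized, monotone and submodular, let Q > 0 be real, let S* ⊆ V be a nonempty finite set with f(S*) ≥ Q, and set k* = |S*|. Let ε be a real number with 0 < ε ≤ e^{−1}, and let j be a natural number satisfying k*·ln(1/ε) < 2^j ≤ 2·k*·ln(1/ε). Then for every list L of elements of V that contains every element of S*, the output S = T_f(L, Q/2^j, 2^j) satisfies |S| ≤ 2·k*·ln(1/ε) and f(S) ≥ (1 − 1/ln(1/ε))·Q. -/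
open scoped Classical

section aux

variable {V : Type*} [DecidableEq V] (f : Finset V → ℝ) (τ : ℝ) (N : ℕ)

noncomputable def tstep (S : Finset V) (e : V) : Finset V :=
  if marginal f e S ≥ τ ∧ S.card < N then insert e S else S

lemma tstep_subset (S : Finset V) (e : V) : S ⊆ tstep f τ N S e := by
  unfold tstep; split <;> simp [Finset.subset_insert]

lemma foldl_subset (L : List V) : ∀ S : Finset V, S ⊆ L.foldl (tstep f τ N) S := by
  induction L with
  | nil => intro S; simp
  | cons a L ih =>
    intro S
    exact (tstep_subset f τ N S a).trans (ih (tstep f τ N S a))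

lemma foldl_card_le (L : List V) : ∀ S : Finset V, S.card ≤ N →
    (L.foldl (tstep f τ N) S).card ≤ N := by
  induction L with
  | nil => intro S h; simpa using h
  | cons a L ih =>
    intro S h
    apply ih
    unfold tstep; split
    · rename_i hc
      exact (Finset.card_insert_le _ _).trans (by omega)
    · exact h

lemma foldl_f_ge (hτ : 0 < τ) (L : List V) : ∀ S : Finset V,
    f S + τ * ((L.foldl (tstep f τ N) S).card - S.card) ≤ f (L.foldl (tstep f τ N) S) := by
  induction L with
  | nil => intro S; simp
  | cons e L ih =>
    intro S
    have ihS := ih (tstep f τ N S e)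
    have key : f S + τ * (((tstep f τ N S e).card : ℝ) - S.card) ≤ f (tstep f τ N S e) := by
      unfold tstep; split
      · rename_i h
        have heS : e ∉ S := by
          intro heS
          have : marginal f e S = 0 := by simp [marginal, Finset.insert_eq_self.2 heS]
          linarith [h.1]
        rw [Finset.card_insert_of_notMem heS]
        have h1 := h.1
        simp only [marginal] at h1
        push_cast
        nlinarith
      · simp
    simp only [List.foldl_cons]
    calc f S + τ * (((L.foldl (tstep f τ N) (tstep f τ N S e)).card : ℝ) - S.card)
        = (f S + τ * (((tstep f τ N S e).card : ℝ) - S.card)) +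
          τ * (((L.foldl (tstep f τ N) (tstep f τ N S e)).card : ℝ) - (tstep f τ N S e).card) := by
          ring
      _ ≤ f (tstep f τ N S e) +
          τ * (((L.foldl (tstep f τ N) (tstep f τ N S e)).card : ℝ) - (tstep f τ N S e).card) := by
          linarith
      _ ≤ _ := ihS

lemma foldl_reject (hsub : IsSubmodularFn f) (L : List V) :
    ∀ (S : Finset V) (e : V), e ∈ L →
    (L.foldl (tstep f τ N) S).card < N → e ∉ L.foldl (tstep f τ N) S →
    marginal f e (L.foldl (tstep f τ N) S) < τ := by
  induction L with
  | nil => intro S e he; cases he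
  | cons a L ih =>
    intro S e he hcard hnotmem
    rcases List.mem_cons.1 he with rfl | heL
    · by_cases hc : marginal f e S ≥ τ ∧ S.card < N
      · exfalso
        apply hnotmem
        have hmem : e ∈ tstep f τ N S e := by
          unfold tstep; rw [if_pos hc]; exact Finset.mem_insert_self _ _
        exact foldl_subset f τ N L _ hmem
      · have hsubT : S ⊆ (e :: L).foldl (tstep f τ N) S := foldl_subset f τ N _ S
        have hScard : S.card < N := lt_of_le_of_lt (Finset.card_le_card hsubT) hcard
        have hmar : marginal f e S < τ := by
          by_contra h
          exact hc ⟨le_of_not_gt h, hScard⟩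
        calc marginal f e ((e :: L).foldl (tstep f τ N) S)
            ≤ marginal f e S := hsub S _ hsubT e hnotmem
          _ < τ := hmar
    · exact ih (tstep f τ N S a) e heL hcard hnotmem

lemma submodular_sum (hsub : IsSubmodularFn f) (A : Finset V) (B : Finset V) :
    f (A ∪ B) ≤ f A + ∑ e ∈ B \ A, marginal f e A := by
  induction B using Finset.induction_on with
  | empty => simp
  | @insert x B hx ih =>
    by_cases hxA : x ∈ A
    · have h1 : A ∪ insert x B = A ∪ B := by
        rw [Finset.union_insert, Finset.insert_eq_self.2 (Finset.mem_union_left B hxA)]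
      have h2 : insert x B \ A = B \ A := by
        rw [Finset.insert_sdiff_of_mem _ hxA]
      rw [h1, h2]; exact ih
    · have h1 : A ∪ insert x B = insert x (A ∪ B) := by
        rw [Finset.union_insert]
      have hxAB : x ∉ A ∪ B := by simp [hxA, hx]
      have h2 : insert x B \ A = insert x (B \ A) := Finset.insert_sdiff_of_notMem _ hxA
      have h3 : x ∉ B \ A := by simp [hx]
      rw [h1, h2, Finset.sum_insert h3]
      have hm : marginal f x (A ∪ B) ≤ marginal f x A :=
        hsub A (A ∪ B) Finset.subset_union_left x hxAB
      have hfe : f (insert x (A ∪ B)) = f (A ∪ B) + marginal f x (A ∪ B) := by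
        simp [marginal]
      linarith

end aux

/-- Main theorem on ESC-Streaming (Theorem 3 of the paper): for the level `j` with
`k*·ln(1/ε) < 2^j ≤ 2·k*·ln(1/ε)`, the thresholding stream with threshold `Q/2^j` and
capacity `2^j` returns a set of size at most `2·k*·ln(1/ε)` whose utility is at least
`(1 − 1/ln(1/ε))·Q`. -/
theorem esc_streaming_main
    {V : Type*} [Fintype V] [DecidableEq V] (f : Finset V → ℝ)
    (h0 : f ∅ = 0) (hmono : IsMonotoneFn f) (hsub : IsSubmodularFn f)
    (Q : ℝ) (hQ : 0 < Q)
    (Sstar : Finset V) (hne : Sstar.Nonempty) (hcov : Q ≤ f Sstar)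
    (ε : ℝ) (hε0 : 0 < ε) (hε1 : ε ≤ Real.exp (-1))
    (j : ℕ)
    (hj1 : (Sstar.card : ℝ) * Real.log (1 / ε) < 2 ^ j)
    (hj2 : (2 ^ j : ℝ) ≤ 2 * (Sstar.card : ℝ) * Real.log (1 / ε))
    (L : List V) (hL : ∀ v ∈ Sstar, v ∈ L) :
    ((tstream f (Q / 2 ^ j) (2 ^ j) L).card : ℝ) ≤ 2 * (Sstar.card : ℝ) * Real.log (1 / ε) ∧
      (1 - 1 / Real.log (1 / ε)) * Q ≤ f (tstream f (Q / 2 ^ j) (2 ^ j) L) := by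
  set τ : ℝ := Q / 2 ^ j with hτdef
  set N : ℕ := 2 ^ j with hNdef
  have htt : tstream f τ N L = L.foldl (tstep f τ N) ∅ := rfl
  set T : Finset V := tstream f τ N L with hT
  -- basic positivity facts
  have h2j : (0:ℝ) < 2 ^ j := by positivity
  have h2jN : ((N : ℕ) : ℝ) = 2 ^ j := by push_cast [hNdef]; ring
  have hτpos : 0 < τ := by positivity
  have hlog : 1 ≤ Real.log (1 / ε) := by
    have hinv : Real.exp 1 ≤ 1 / ε := by
      rw [le_div_iff₀ hε0]
      calc Real.exp 1 * ε ≤ Real.exp 1 * Real.exp (-1) := by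
            exact mul_le_mul_of_nonneg_left hε1 (Real.exp_pos 1).le
        _ = 1 := by rw [← Real.exp_add]; norm_num
    have : (0:ℝ) < 1 / ε := by positivity
    rwa [Real.le_log_iff_exp_le this]
  have hlogpos : 0 < Real.log (1 / ε) := lt_of_lt_of_le one_pos hlog
  -- card bound
  have hcardN : T.card ≤ N := by
    exact foldl_card_le f τ N L ∅ (by simp)
  have hcardR : ((T.card : ℕ) : ℝ) ≤ 2 * (Sstar.card : ℝ) * Real.log (1 / ε) := by
    calc ((T.card : ℕ) : ℝ) ≤ (N : ℝ) := by exact_mod_cast hcardN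
      _ = 2 ^ j := h2jN
      _ ≤ _ := hj2
  refine ⟨hcardR, ?_⟩
  -- utility bound
  rcases eq_or_lt_of_le hcardN with hfull | hless
  · -- full capacity: f T ≥ τ * N = Q
    have hge := foldl_f_ge f τ N hτpos L ∅
    rw [← htt] at hge
    simp only [h0, Finset.card_empty] at hge
    have hfT : Q ≤ f T := by
      have : ((T.card : ℕ) : ℝ) = 2 ^ j := by rw [hfull]; exact h2jN
      have hτN : τ * ((T.card : ℝ) - (0:ℕ)) = Q := by
        rw [this]; push_cast; rw [hτdef, sub_zero, div_mul_cancel₀ _ h2j.ne']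
      calc Q = 0 + τ * ((T.card : ℝ) - ((0:ℕ):ℝ)) := by rw [hτN]; ring
        _ ≤ f T := hge
    have h1 : (1 - 1 / Real.log (1 / ε)) * Q ≤ Q := by
      have : 0 < 1 / Real.log (1 / ε) := by positivity
      nlinarith
    linarith
  · -- below capacity: every e ∈ Sstar \ T was rejected
    have hrej : ∀ e ∈ Sstar \ T, marginal f e T ≤ τ := by
      intro e he
      rw [Finset.mem_sdiff] at he
      have := foldl_reject f τ N hsub L ∅ e (hL e he.1)
        (by rw [← htt]; exact hless) (by rw [← htt]; exact he.2)
      rw [← htt] at this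
      exact this.le
    have hsum : ∑ e ∈ Sstar \ T, marginal f e T ≤ (Sstar.card : ℝ) * τ := by
      calc ∑ e ∈ Sstar \ T, marginal f e T
          ≤ (Sstar \ T).card • τ := Finset.sum_le_card_nsmul _ _ _ hrej
        _ = ((Sstar \ T).card : ℝ) * τ := by rw [nsmul_eq_mul]
        _ ≤ (Sstar.card : ℝ) * τ := by
            apply mul_le_mul_of_nonneg_right _ hτpos.le
            exact_mod_cast Finset.card_le_card (Finset.sdiff_subset)
    have hQle : Q ≤ f T + (Sstar.card : ℝ) * τ := by
      calc Q ≤ f Sstar := hcov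
        _ ≤ f (T ∪ Sstar) := hmono _ _ Finset.subset_union_right
        _ ≤ f T + ∑ e ∈ Sstar \ T, marginal f e T := submodular_sum f hsub T Sstar
        _ ≤ f T + (Sstar.card : ℝ) * τ := by linarith
    have hkey : (Sstar.card : ℝ) * τ ≤ Q / Real.log (1 / ε) := by
      rw [hτdef, ← mul_div_assoc, div_le_div_iff₀ h2j hlogpos]
      nlinarith
    have : Q / Real.log (1 / ε) = 1 / Real.log (1 / ε) * Q := by ring
    linarith [hQle, hkey]
end

section
/- Bicriteria form of the ESC-Streaming guarantee (Theorem 2 of the paper): Let f : Finset V → ℝ be normalized, monotone and submodular, let Q > 0 be real, let S* ⊆ V be a nonempty finite set with f(S*) ≥ Q, and set k* = |S*|. Let ε̃ be a real number with 0 < ε̃ < 1, and let j be a natural number satisfying k*/ε̃ < 2^j ≤ 2·k*/ε̃. Then for every list L of elements of V that contains every element of S*, the output S = T_f(L, Q/2^j, 2^j) satisfies |S| ≤ (2/ε̃)·k* and f(S) ≥ (1 − ε̃)·Q; that is, ESC-Streaming is a (1 − ε̃, 2/ε̃)-bicriteria approximation for the Submodular Cover problem. -/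
open scoped Classical

namespace ESCaux

variable {V : Type*} [DecidableEq V]

noncomputable def G (f : Finset V → ℝ) (τ : ℝ) (N : ℕ) (S : Finset V) (e : V) : Finset V :=
  if marginal f e S ≥ τ ∧ S.card < N then insert e S else S

lemma tstream_eq (f : Finset V → ℝ) (τ : ℝ) (N : ℕ) (L : List V) :
    tstream f τ N L = L.foldl (G f τ N) ∅ := rfl

lemma subset_G (f : Finset V → ℝ) (τ : ℝ) (N : ℕ) (S : Finset V) (e : V) :
    S ⊆ G f τ N S e := by
  unfold G; split
  · exact Finset.subset_insert _ _
  · exact Finset.Subset.refl _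

lemma fold_subset (f : Finset V → ℝ) (τ : ℝ) (N : ℕ) :
    ∀ (L : List V) (S : Finset V), S ⊆ L.foldl (G f τ N) S
  | [], S => Finset.Subset.refl S
  | e :: L, S => (subset_G f τ N S e).trans (fold_subset f τ N L _)

lemma card_G (f : Finset V → ℝ) (τ : ℝ) (N : ℕ) (S : Finset V) (e : V)
    (h : S.card ≤ N) : (G f τ N S e).card ≤ N := by
  unfold G; split
  next hc => exact le_trans (Finset.card_insert_le _ _) hc.2
  next => exact h

lemma fold_card (f : Finset V → ℝ) (τ : ℝ) (N : ℕ) :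
    ∀ (L : List V) (S : Finset V), S.card ≤ N → (L.foldl (G f τ N) S).card ≤ N
  | [], S, h => h
  | e :: L, S, h => fold_card f τ N L _ (card_G f τ N S e h)

lemma fold_value (f : Finset V → ℝ) (τ : ℝ) (N : ℕ) (hτ : 0 ≤ τ) :
    ∀ (L : List V) (S : Finset V), τ * S.card ≤ f S →
      τ * (L.foldl (G f τ N) S).card ≤ f (L.foldl (G f τ N) S)
  | [], S, h => h
  | e :: L, S, h => by
      refine fold_value f τ N hτ L (G f τ N S e) ?_
      unfold G; split
      next hc =>
        calc τ * ((insert e S).card : ℝ)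
              ≤ τ * (S.card + 1) := by
                have := Finset.card_insert_le e S
                have h2 : ((insert e S).card : ℝ) ≤ (S.card : ℝ) + 1 := by exact_mod_cast this
                nlinarith
            _ = τ * S.card + τ := by ring
            _ ≤ f S + marginal f e S := add_le_add h hc.1
            _ = f (insert e S) := by unfold marginal; ring
      next => exact h

lemma fold_reject (f : Finset V → ℝ) (τ : ℝ) (N : ℕ) (hsub : IsSubmodularFn f) :
    ∀ (L : List V) (S : Finset V) (e : V), e ∈ L →
      e ∉ L.foldl (G f τ N) S → (L.foldl (G f τ N) S).card < N →
      marginal f e (L.foldl (G f τ N) S) < τ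
  | [], S, e, he, _, _ => absurd he List.not_mem_nil
  | a :: L, S, e, he, hnm, hcard => by
      by_cases heL : e ∈ L
      · exact fold_reject f τ N hsub L (G f τ N S a) e heL hnm hcard
      · have hea : e = a := by
          rcases List.mem_cons.mp he with h | h
          · exact h
          · exact absurd h heL
        subst hea
        have hGS : G f τ N S e = S := by
          unfold G; split
          next hc =>
            exfalso
            have : e ∈ List.foldl (G f τ N) S (e :: L) := by
              rw [List.foldl_cons]
              have hG : G f τ N S e = insert e S := by unfold G; simp [hc]
              rw [hG]
              exact fold_subset f τ N L _ (Finset.mem_insert_self e S)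
            exact hnm this
          next => rfl
        rw [List.foldl_cons, hGS] at hnm hcard ⊢
        have hsubF : S ⊆ L.foldl (G f τ N) S := fold_subset f τ N L S
        have heS : e ∉ S := fun h => hnm (hsubF h)
        have hrej : ¬ (marginal f e S ≥ τ ∧ S.card < N) := by
          intro hc
          have : G f τ N S e = insert e S := by unfold G; simp [hc]
          rw [this] at hGS
          exact heS (hGS ▸ Finset.mem_insert_self e S)
        have hcardS : S.card < N :=
          lt_of_le_of_lt (Finset.card_le_card hsubF) hcard
        have hm : marginal f e S < τ := by
          by_contra h
          exact hrej ⟨le_of_not_gt h, hcardS⟩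
        exact lt_of_le_of_lt (hsub S _ hsubF e hnm) hm

lemma union_bound (f : Finset V → ℝ) (τ : ℝ) (hτ : 0 ≤ τ)
    (hsub : IsSubmodularFn f) (S : Finset V) :
    ∀ T : Finset V, (∀ e ∈ T, e ∉ S → marginal f e S ≤ τ) →
      f (S ∪ T) ≤ f S + T.card * τ := by
  intro T
  induction T using Finset.induction_on with
  | empty => intro _; simp
  | @insert a T ha ih =>
      intro h
      have hT : f (S ∪ T) ≤ f S + T.card * τ :=
        ih (fun e he => h e (Finset.mem_insert_of_mem he))
      have hcard : ((insert a T).card : ℝ) = T.card + 1 := by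
        rw [Finset.card_insert_of_notMem ha]; push_cast; ring
      rw [Finset.union_insert]
      by_cases haST : a ∈ S ∪ T
      · rw [Finset.insert_eq_self.mpr haST]
        rw [hcard]; nlinarith
      · have haS : a ∉ S := fun h' => haST (Finset.mem_union_left _ h')
        have hma : marginal f a S ≤ τ := h a (Finset.mem_insert_self a T) haS
        have hsm : marginal f a (S ∪ T) ≤ marginal f a S :=
          hsub S (S ∪ T) (Finset.subset_union_left) a haST
        have : f (insert a (S ∪ T)) = f (S ∪ T) + marginal f a (S ∪ T) := by
          unfold marginal; ring
        rw [this, hcard]; nlinarith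

end ESCaux

/-- Bicriteria form of the ESC-Streaming guarantee (Theorem 2 of the paper): for the level `j`
with `k*/ε̃ < 2^j ≤ 2·k*/ε̃`, the thresholding stream with threshold `Q/2^j` and capacity `2^j`
returns a set of size at most `(2/ε̃)·k*` whose utility is at least `(1 − ε̃)·Q`. -/
theorem esc_streaming_bicriteria
    {V : Type*} [Fintype V] [DecidableEq V] (f : Finset V → ℝ)
    (h0 : f ∅ = 0) (hmono : IsMonotoneFn f) (hsub : IsSubmodularFn f)
    (Q : ℝ) (hQ : 0 < Q)
    (Sstar : Finset V) (hne : Sstar.Nonempty) (hcov : Q ≤ f Sstar)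
    (ε' : ℝ) (hε0 : 0 < ε') (hε1 : ε' < 1)
    (j : ℕ)
    (hj1 : (Sstar.card : ℝ) / ε' < 2 ^ j)
    (hj2 : (2 ^ j : ℝ) ≤ 2 * (Sstar.card : ℝ) / ε')
    (L : List V) (hL : ∀ v ∈ Sstar, v ∈ L) :
    ((tstream f (Q / 2 ^ j) (2 ^ j) L).card : ℝ) ≤ (2 / ε') * (Sstar.card : ℝ) ∧
      (1 - ε') * Q ≤ f (tstream f (Q / 2 ^ j) (2 ^ j) L) := by
  set τ : ℝ := Q / 2 ^ j with hτdef
  set N : ℕ := 2 ^ j with hNdef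
  have h2j : (0:ℝ) < 2 ^ j := by positivity
  have hτ0 : 0 ≤ τ := le_of_lt (div_pos hQ h2j)
  set F : Finset V := tstream f τ N L with hFdef
  have hFeq : F = L.foldl (ESCaux.G f τ N) ∅ := ESCaux.tstream_eq f τ N L
  have hcard : F.card ≤ N := by
    rw [hFeq]; exact ESCaux.fold_card f τ N L ∅ (by simp)
  have hNcast : ((N : ℕ) : ℝ) = 2 ^ j := by rw [hNdef]; push_cast; ring
  constructor
  · calc (F.card : ℝ) ≤ (N : ℝ) := by exact_mod_cast hcard
      _ ≤ 2 * (Sstar.card : ℝ) / ε' := by rw [hNcast]; exact hj2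
      _ = (2 / ε') * (Sstar.card : ℝ) := by ring
  · have hval : τ * F.card ≤ f F := by
      rw [hFeq]
      exact ESCaux.fold_value f τ N hτ0 L ∅ (by simp [h0])
    by_cases hfull : F.card < N
    · -- not full: use rejection + submodular union bound
      have hrej : ∀ e ∈ Sstar, e ∉ F → marginal f e F ≤ τ := by
        intro e heS heF
        have := ESCaux.fold_reject f τ N hsub L ∅ e (hL e heS)
          (by rwa [hFeq] at heF) (by rwa [hFeq] at hfull)
        rw [← hFeq] at this
        exact le_of_lt this
      have hub : f (F ∪ Sstar) ≤ f F + Sstar.card * τ :=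
        ESCaux.union_bound f τ hτ0 hsub F Sstar hrej
      have hmon : f Sstar ≤ f (F ∪ Sstar) :=
        hmono Sstar (F ∪ Sstar) Finset.subset_union_right
      have hk : (Sstar.card : ℝ) < ε' * 2 ^ j := by
        have := (div_lt_iff₀ hε0).mp hj1
        linarith
      have hkτ : (Sstar.card : ℝ) * τ ≤ ε' * Q := by
        rw [hτdef]
        rw [div_eq_mul_inv, ← mul_assoc]
        have h2inv : (0:ℝ) < (2 ^ j)⁻¹ := by positivity
        have : (Sstar.card : ℝ) * Q ≤ ε' * 2 ^ j * Q := by nlinarith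
        calc (Sstar.card : ℝ) * Q * (2 ^ j)⁻¹ ≤ ε' * 2 ^ j * Q * (2 ^ j)⁻¹ := by nlinarith
          _ = ε' * Q := by field_simp
      linarith
    · -- full: f F ≥ τ * N = Q
      have hFN : (F.card : ℝ) = (N : ℝ) := by
        have : F.card = N := le_antisymm hcard (le_of_not_gt hfull)
        exact_mod_cast this
      have : τ * (N : ℝ) ≤ f F := by rw [← hFN]; exact hval
      rw [hNcast] at this
      have hQle : Q ≤ f F := by
        have : Q / 2 ^ j * 2 ^ j = Q := by field_simp
        linarith [this]
      nlinarith
end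

section
/- One step of the offline greedy algorithm: Let f : Finset V → ℝ be monotone and submodular, let Q be a real number, and let S* ⊆ V be a nonempty finite set with f(S*) ≥ Q; set k* = |S*|. Let S ⊆ V be any finite set, and let e* ∈ V be an element maximizing the marginal gain with respect to S, i.e. Δ(e*|S) ≥ Δ(w|S) for all w ∈ V. Then Q − f(S ∪ {e*}) ≤ (1 − 1/k*)·(Q − f(S)). -/
open Finset

lemma marginal_of_mem {V : Type*} [DecidableEq V] (f : Finset V → ℝ) {e : V} {S : Finset V}
    (he : e ∈ S) : marginal f e S = 0 := by
  rw [marginal, insert_eq_of_mem he, sub_self]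

lemma IsSubmodularFn.union_sub_le_sum_marginal {V : Type*} [DecidableEq V] {f : Finset V → ℝ}
    (hsub : IsSubmodularFn f) (S T : Finset V) :
    f (S ∪ T) - f S ≤ ∑ e ∈ T, marginal f e S := by
  induction T using Finset.induction_on with
  | empty => simp
  | @insert a T haT ih =>
    have hstep : marginal f a (S ∪ T) ≤ marginal f a S := by
      by_cases haS : a ∈ S
      · rw [marginal_of_mem f (mem_union_left T haS), marginal_of_mem f haS]
      · exact hsub S (S ∪ T) subset_union_left a (by simp [haS, haT])
    rw [sum_insert haT, union_insert, ← sub_add_sub_cancel _ (f (S ∪ T))]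
    exact add_le_add hstep ih

theorem greedy_step_general
    {V : Type*} [DecidableEq V] (f : Finset V → ℝ)
    (hmono : IsMonotoneFn f) (hsub : IsSubmodularFn f)
    (Q : ℝ) (Sstar : Finset V) (hne : Sstar.Nonempty) (hcov : Q ≤ f Sstar)
    (S : Finset V) (estar : V)
    (hmax : ∀ w : V, marginal f w S ≤ marginal f estar S) :
    Q - f (insert estar S) ≤ (1 - 1 / (Sstar.card : ℝ)) * (Q - f S) := by
  have hk : (0 : ℝ) < Sstar.card := by exact_mod_cast hne.card_pos
  have hgap : Q - f S ≤ Sstar.card * marginal f estar S :=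
    calc Q - f S ≤ f (S ∪ Sstar) - f S := by linarith [hmono Sstar (S ∪ Sstar) subset_union_right]
      _ ≤ ∑ e ∈ Sstar, marginal f e S := hsub.union_sub_le_sum_marginal S Sstar
      _ ≤ ∑ _e ∈ Sstar, marginal f estar S := sum_le_sum fun w _ => hmax w
      _ = Sstar.card * marginal f estar S := by rw [sum_const, nsmul_eq_mul]
  have hfrac : (Q - f S) / Sstar.card ≤ marginal f estar S := (div_le_iff₀' hk).2 hgap
  calc Q - f (insert estar S) = (Q - f S) - marginal f estar S := by rw [marginal]; ring
    _ ≤ (Q - f S) - (Q - f S) / Sstar.card := by linarith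
    _ = (1 - 1 / (Sstar.card : ℝ)) * (Q - f S) := by ring

/-- One step of the offline greedy algorithm: adding an element `e*` of maximal marginal
gain to `S` reduces the residual utility `Q − f(S)` by a factor `1 − 1/k*`. -/
theorem greedy_step
    {V : Type*} [Fintype V] [DecidableEq V] (f : Finset V → ℝ)
    (hmono : IsMonotoneFn f) (hsub : IsSubmodularFn f)
    (Q : ℝ) (Sstar : Finset V) (hne : Sstar.Nonempty) (hcov : Q ≤ f Sstar)
    (S : Finset V) (estar : V)
    (hmax : ∀ w : V, marginal f w S ≤ marginal f estar S) :
    Q - f (insert estar S) ≤ (1 - 1 / (Sstar.card : ℝ)) * (Q - f S) :=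
  greedy_step_general f hmono hsub Q Sstar hne hcov S estar hmax
end

section
/- Partial-cover guarantee of the offline greedy algorithm (used in Section 4 of the paper): Let f : Finset V → ℝ be normalized, monotone and submodular, let Q > 0 be real, let S* ⊆ V be a nonempty finite set with f(S*) ≥ Q, and set k* = |S*|. Let (S_n) be a greedy sequence: S_0 = ∅ and for each n, S_{n+1} = S_n ∪ {e_n} where e_n ∈ V satisfies Δ(e_n|S_n) ≥ Δ(w|S_n) for all w ∈ V. Then for every real ε with 0 < ε < 1 and every natural number n with n ≥ k*·ln(1/ε), one has f(S_n) ≥ (1 − ε)·Q. In particular, the greedy algorithm stopped once it achieves utility (1 − ε)·Q picks at most ⌈k*·ln(1/ε)⌉ elements. -/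
lemma marg_sum {V : Type*} [DecidableEq V] (f : Finset V → ℝ) (hsub : IsSubmodularFn f)
    (T S : Finset V) : f (T ∪ S) - f S ≤ ∑ x ∈ T, marginal f x S := by
  induction T using Finset.induction_on with
  | empty => simp
  | insert _ _ ha ih =>
    rename_i a T
    rw [Finset.sum_insert ha]
    by_cases haS : a ∈ S
    · have h1 : insert a T ∪ S = T ∪ S := by
        rw [Finset.insert_union, Finset.insert_eq_self]
        exact Finset.mem_union_right _ haS
      have h2 : marginal f a S = 0 := by
        simp [marginal, Finset.insert_eq_self.2 haS]
      rw [h1, h2]; linarith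
    · have haTS : a ∉ T ∪ S := by
        simp [ha, haS]
      have h1 : insert a T ∪ S = insert a (T ∪ S) := by
        rw [Finset.insert_union]
      have h2 := hsub S (T ∪ S) Finset.subset_union_right a haTS
      simp only [marginal] at h2
      rw [h1]
      have := ih
      simp only [marginal] at *
      linarith

/-- Partial-cover guarantee of the offline greedy algorithm: along any greedy sequence
`S_0 = ∅`, `S_{n+1} = S_n ∪ {e_n}` with `e_n` of maximal marginal gain, for every
`0 < ε < 1` and every `n ≥ k*·ln(1/ε)` one has `f(S_n) ≥ (1 − ε)·Q`; in particular the
greedy set after `⌈k*·ln(1/ε)⌉` steps already achieves utility `(1 − ε)·Q`. -/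
theorem greedy_partial_cover
    {V : Type*} [Fintype V] [DecidableEq V] (f : Finset V → ℝ)
    (h0 : f ∅ = 0) (hmono : IsMonotoneFn f) (hsub : IsSubmodularFn f)
    (Q : ℝ) (hQ : 0 < Q)
    (Sstar : Finset V) (hne : Sstar.Nonempty) (hcov : Q ≤ f Sstar)
    (S : ℕ → Finset V) (e : ℕ → V)
    (hS0 : S 0 = ∅)
    (hSsucc : ∀ n : ℕ, S (n + 1) = insert (e n) (S n))
    (hgreedy : ∀ (n : ℕ) (w : V), marginal f w (S n) ≤ marginal f (e n) (S n)) :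
    ∀ ε : ℝ, 0 < ε → ε < 1 →
      (∀ n : ℕ, (Sstar.card : ℝ) * Real.log (1 / ε) ≤ (n : ℝ) → (1 - ε) * Q ≤ f (S n)) ∧
        (1 - ε) * Q ≤ f (S ⌈(Sstar.card : ℝ) * Real.log (1 / ε)⌉₊) := by
  set k : ℝ := (Sstar.card : ℝ) with hk
  have hk1 : (1 : ℝ) ≤ k := by
    rw [hk]
    exact_mod_cast Finset.card_pos.2 hne
  have hkpos : (0 : ℝ) < k := lt_of_lt_of_le one_pos hk1
  -- key recursion
  have hstep : ∀ n, Q - f (S (n + 1)) ≤ (1 - 1/k) * (Q - f (S n)) := by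
    intro n
    have h1 : f Sstar - f (S n) ≤ f (Sstar ∪ S n) - f (S n) := by
      have := hmono Sstar (Sstar ∪ S n) Finset.subset_union_left
      linarith
    have h2 := marg_sum f hsub Sstar (S n)
    have h3 : ∑ x ∈ Sstar, marginal f x (S n) ≤ k * marginal f (e n) (S n) := by
      calc ∑ x ∈ Sstar, marginal f x (S n) ≤ ∑ _x ∈ Sstar, marginal f (e n) (S n) :=
            Finset.sum_le_sum fun x _ => hgreedy n x
        _ = k * marginal f (e n) (S n) := by rw [Finset.sum_const, nsmul_eq_mul]
    have h4 : Q - f (S n) ≤ k * (f (S (n+1)) - f (S n)) := by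
      have : marginal f (e n) (S n) = f (S (n+1)) - f (S n) := by
        rw [hSsucc n]; rfl
      rw [← this]
      linarith
    have : (Q - f (S n)) / k ≤ f (S (n+1)) - f (S n) := by
      rw [div_le_iff₀ hkpos] at *
      linarith [h4]
    have hexp : (1 - 1/k) * (Q - f (S n)) = (Q - f (S n)) - (Q - f (S n))/k := by
      field_simp
    rw [hexp]; linarith
  have hgeom : ∀ n : ℕ, Q - f (S n) ≤ (1 - 1/k)^n * Q := by
    intro n
    induction n with
    | zero => simp [hS0, h0]
    | succ n ih =>
      have hfac : (0:ℝ) ≤ 1 - 1/k := by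
        have : 1/k ≤ 1 := by
          rw [div_le_one hkpos]; exact hk1
        linarith
      calc Q - f (S (n+1)) ≤ (1 - 1/k) * (Q - f (S n)) := hstep n
        _ ≤ (1 - 1/k) * ((1 - 1/k)^n * Q) := by
            exact mul_le_mul_of_nonneg_left ih hfac
        _ = (1 - 1/k)^(n+1) * Q := by ring
  intro ε hε0 hε1
  have main : ∀ n : ℕ, k * Real.log (1 / ε) ≤ (n : ℝ) → (1 - ε) * Q ≤ f (S n) := by
    intro n hn
    have hfac : (0:ℝ) ≤ 1 - 1/k := by
      have : 1/k ≤ 1 := by rw [div_le_one hkpos]; exact hk1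
      linarith
    have hle : (1 - 1/k : ℝ) ≤ Real.exp (-(1/k)) := by
      have := Real.add_one_le_exp (-(1/k))
      linarith
    have hpow : (1 - 1/k)^n ≤ Real.exp (-(n/k)) := by
      calc (1 - 1/k)^n ≤ (Real.exp (-(1/k)))^n := pow_le_pow_left₀ hfac hle n
        _ = Real.exp (-(n/k)) := by
          rw [← Real.exp_nat_mul]; ring_nf
    have hεe : Real.exp (-(n/k)) ≤ ε := by
      rw [← Real.exp_log hε0]
      apply Real.exp_le_exp.2
      rw [Real.log_div one_ne_zero (ne_of_gt hε0), Real.log_one] at hn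
      have : k * (0 - Real.log ε) ≤ n := hn
      have hd : Real.log ε + (n:ℝ) / k = (k * Real.log ε + n) / k := by
        field_simp
      rw [neg_le_iff_add_nonneg, hd]
      apply div_nonneg _ (le_of_lt hkpos)
      nlinarith
    have : (1 - 1/k)^n * Q ≤ ε * Q := by
      apply mul_le_mul_of_nonneg_right _ (le_of_lt hQ)
      exact le_trans hpow hεe
    have := hgeom n
    nlinarith
  refine ⟨main, main _ ?_⟩
  exact Nat.le_ceil _
end

section
/- The Informative Vector Machine utility is normalized, monotone and submodular (claimed in Section 6.1 of the paper): Let V be a finite type, let K : Matrix V V ℝ be a positive semidefinite matrix, and let σ > 0 be a real number. Define f : Finset V → ℝ by f(S) = (1/2)·log det(I + σ^{−2}·K_{S,S}), where K_{S,S} is the principal submatrix of K whose rows and columns are indexed by the elements of S (i.e. K.submatrix restricted along the inclusion S ↪ V) and I is the identity matrix of the corresponding size. Then f(∅) = 0, f is monotone, and f is submodular. -/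
open Matrix

namespace IVMaux

variable {V : Type*} [Fintype V] [DecidableEq V]

/-- Principal submatrix indexed by a finset. -/
def sub (N : Matrix V V ℝ) (S : Finset V) : Matrix {a // a ∈ S} {a // a ∈ S} ℝ :=
  N.submatrix (fun i => (i : V)) (fun i => (i : V))

/-- Extend a vector on a finset by zero. -/
def ext (S : Finset V) (x : {a // a ∈ S} → ℝ) : V → ℝ :=
  fun v => if h : v ∈ S then x ⟨v, h⟩ else 0

lemma sum_ext (S : Finset V) (G : {a // a ∈ S} → ℝ) :
    ∑ j : V, (if h : j ∈ S then G ⟨j, h⟩ else 0) = ∑ j : {a // a ∈ S}, G j := by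
  classical
  rw [← Finset.sum_subset (Finset.subset_univ S) (fun x _ hx => dif_neg hx)]
  rw [Finset.sum_subtype S (fun x => Iff.rfl) (fun j => if h : j ∈ S then G ⟨j, h⟩ else 0)]
  exact Finset.sum_congr rfl fun j _ => by simp

lemma mulVec_ext_apply (N : Matrix V V ℝ) (S : Finset V) (x : {a // a ∈ S} → ℝ) (v : V) :
    (N *ᵥ ext S x) v = ∑ j : {a // a ∈ S}, N v j * x j := by
  simp only [Matrix.mulVec, dotProduct, ext]
  rw [← sum_ext S (fun j => N v j * x j)]
  exact Finset.sum_congr rfl fun j _ => by by_cases h : j ∈ S <;> simp [h]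

lemma mulVec_sub_apply (N : Matrix V V ℝ) (S : Finset V) (x : {a // a ∈ S} → ℝ)
    (i : {a // a ∈ S}) : (sub N S *ᵥ x) i = (N *ᵥ ext S x) (i : V) := by
  rw [mulVec_ext_apply]
  simp [Matrix.mulVec, dotProduct, sub]

lemma quad_sub (N : Matrix V V ℝ) (S : Finset V) (x : {a // a ∈ S} → ℝ) :
    x ⬝ᵥ (sub N S *ᵥ x) = ext S x ⬝ᵥ (N *ᵥ ext S x) := by
  have : ext S x ⬝ᵥ (N *ᵥ ext S x) = ∑ j : {a // a ∈ S}, x j * (N *ᵥ ext S x) (j : V) := by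
    simp only [dotProduct, ext]
    rw [← sum_ext S (fun j => x j * (N *ᵥ ext S x) (j : V))]
    exact Finset.sum_congr rfl fun j _ => by by_cases h : j ∈ S <;> simp [h]
  rw [this]
  exact Finset.sum_congr rfl fun j _ => by rw [mulVec_sub_apply]

lemma posDef_sub {N : Matrix V V ℝ} (hN : N.PosDef) (S : Finset V) : (sub N S).PosDef := by
  refine Matrix.posDef_iff_dotProduct_mulVec.mpr ⟨?_, ?_⟩
  · ext i j
    simpa [sub, Matrix.conjTranspose_apply] using congrFun (congrFun hN.1 (i : V)) (j : V)
  · intro x hx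
    have hsx : star x = x := by funext i; simp
    rw [hsx, quad_sub]
    have hne : ext S x ≠ 0 := by
      intro h
      apply hx
      funext i
      have := congrFun h (i : V)
      simpa [ext, i.2] using this
    have := hN.dotProduct_mulVec_pos hne
    rwa [show star (ext S x) = ext S x from funext fun i => by simp] at this

def splitEquiv (S : Finset V) (e : V) (he : e ∉ S) :
    {a // a ∈ S} ⊕ Unit ≃ {a // a ∈ insert e S} where
  toFun := Sum.elim (fun i => ⟨i, Finset.mem_insert_of_mem i.2⟩)
    (fun _ => ⟨e, Finset.mem_insert_self e S⟩)
  invFun := fun j => if h : (j : V) ∈ S then Sum.inl ⟨j, h⟩ else Sum.inr ()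
  left_inv := by
    rintro (i | ⟨⟩)
    · simp
    · simp [he]
  right_inv := fun j => by
    by_cases h : (j : V) ∈ S
    · simp [h]
    · have hje : (j : V) = e := ((Finset.mem_insert.mp j.2).resolve_right h)
      simp only [dif_neg h, Sum.elim_inr]
      exact Subtype.ext hje.symm

/-- The Schur complement scalar. -/
noncomputable def schur (N : Matrix V V ℝ) (S : Finset V) (e : V) : ℝ :=
  N e e - (fun i : {a // a ∈ S} => N e i) ⬝ᵥ ((sub N S)⁻¹ *ᵥ fun i : {a // a ∈ S} => N i e)

lemma det_insert {N : Matrix V V ℝ} (hN : N.PosDef) (S : Finset V) (e : V) (he : e ∉ S) :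
    (sub N (insert e S)).det = (sub N S).det * schur N S e := by
  classical
  have hSPD : (sub N S).PosDef := posDef_sub hN S
  haveI : Invertible (sub N S) :=
    (Matrix.isUnit_iff_isUnit_det _ |>.2 hSPD.det_pos.ne'.isUnit).invertible
  have hre : (sub N (insert e S)).submatrix (splitEquiv S e he) (splitEquiv S e he) =
      Matrix.fromBlocks (sub N S) (Matrix.of fun i _ => N i e) (Matrix.of fun _ j => N e j) (Matrix.of fun _ _ => N e e) := by
    ext i j
    rcases i with i | i <;> rcases j with j | j <;>
      simp [sub, Matrix.submatrix_apply, splitEquiv, Matrix.fromBlocks]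
  rw [← Matrix.det_submatrix_equiv_self (splitEquiv S e he) (sub N (insert e S)), hre,
    Matrix.det_fromBlocks₁₁]
  congr 1
  rw [Matrix.det_unique]
  simp only [Matrix.sub_apply, Matrix.mul_apply, Matrix.of_apply]
  rw [Matrix.invOf_eq_nonsing_inv]
  simp only [schur, dotProduct, Matrix.mulVec, dotProduct]
  congr 1
  simp only [Finset.sum_mul, Finset.mul_sum]
  rw [Finset.sum_comm]
  exact Finset.sum_congr rfl fun i _ => Finset.sum_congr rfl fun j _ => by ring

/-- The optimal extension vector. -/
noncomputable def xstar (N : Matrix V V ℝ) (S : Finset V) (e : V) : {a // a ∈ S} → ℝ :=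
  (sub N S)⁻¹ *ᵥ fun i : {a // a ∈ S} => N i e

noncomputable def vstar (N : Matrix V V ℝ) (S : Finset V) (e : V) : V → ℝ :=
  Pi.single e 1 - ext S (xstar N S e)

lemma vstar_apply_e (N : Matrix V V ℝ) (S : Finset V) (e : V) (he : e ∉ S) :
    vstar N S e e = 1 := by
  simp [vstar, ext, he]

lemma vstar_apply_not_mem (N : Matrix V V ℝ) (S : Finset V) (e : V) (x : V)
    (hx1 : x ≠ e) (hx2 : x ∉ S) : vstar N S e x = 0 := by
  simp [vstar, ext, hx2, Pi.single_eq_of_ne hx1]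

lemma mulVec_vstar_mem {N : Matrix V V ℝ} (hN : N.PosDef) (S : Finset V) (e : V)
    (i : V) (hi : i ∈ S) : (N *ᵥ vstar N S e) i = 0 := by
  have hSPD : (sub N S).PosDef := posDef_sub hN S
  have hinv : sub N S * (sub N S)⁻¹ = 1 :=
    Matrix.mul_nonsing_inv _ hSPD.det_pos.ne'.isUnit
  rw [vstar, Matrix.mulVec_sub, Pi.sub_apply]
  have h1 : (N *ᵥ Pi.single e 1) i = N i e := by simp
  have h2 : (N *ᵥ ext S (xstar N S e)) i = N i e := by
    rw [← mulVec_sub_apply N S (xstar N S e) ⟨i, hi⟩, xstar, Matrix.mulVec_mulVec, hinv,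
      Matrix.one_mulVec]
  rw [h1, h2, sub_self]

lemma mulVec_vstar_e {N : Matrix V V ℝ} (S : Finset V) (e : V) :
    (N *ᵥ vstar N S e) e = schur N S e := by
  rw [vstar, Matrix.mulVec_sub, Pi.sub_apply, mulVec_ext_apply]
  simp only [schur, dotProduct, xstar]
  simp [Finset.mul_sum]

lemma quad_vstar {N : Matrix V V ℝ} (hN : N.PosDef) (S : Finset V) (e : V) (he : e ∉ S) :
    vstar N S e ⬝ᵥ (N *ᵥ vstar N S e) = schur N S e := by
  rw [dotProduct]
  rw [Finset.sum_eq_single e]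
  · rw [vstar_apply_e N S e he, mulVec_vstar_e, one_mul]
  · intro i _ hie
    by_cases hiS : i ∈ S
    · rw [mulVec_vstar_mem hN S e i hiS, mul_zero]
    · rw [vstar_apply_not_mem N S e i hie hiS, zero_mul]
  · exact fun h => absurd (Finset.mem_univ e) h

lemma schur_le_quad {N : Matrix V V ℝ} (hN : N.PosDef) (S : Finset V) (e : V) (he : e ∉ S)
    (v : V → ℝ) (hv1 : v e = 1) (hv0 : ∀ x, x ≠ e → x ∉ S → v x = 0) :
    schur N S e ≤ v ⬝ᵥ (N *ᵥ v) := by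
  have hNt : Nᵀ = N := by
    ext i j
    simpa [Matrix.conjTranspose_apply] using congrFun (congrFun hN.1 i) j
  set w : V → ℝ := v - vstar N S e with hw
  have hve : v = vstar N S e + w := by simp [hw]
  have hwe : w e = 0 := by simp [hw, hv1, vstar_apply_e N S e he]
  have hwx : ∀ x, x ≠ e → x ∉ S → w x = 0 := fun x h1 h2 => by
    simp [hw, hv0 x h1 h2, vstar_apply_not_mem N S e x h1 h2]
  have hcross : w ⬝ᵥ (N *ᵥ vstar N S e) = 0 := by
    apply Finset.sum_eq_zero
    intro i _
    by_cases hiS : i ∈ S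
    · rw [mulVec_vstar_mem hN S e i hiS, mul_zero]
    · by_cases hie : i = e
      · subst hie; rw [hwe, zero_mul]
      · rw [hwx i hie hiS, zero_mul]
  have hcross2 : vstar N S e ⬝ᵥ (N *ᵥ w) = 0 := by
    rw [Matrix.dotProduct_mulVec, ← hNt, Matrix.vecMul_transpose, hNt, dotProduct_comm]
    exact hcross
  have hq : 0 ≤ w ⬝ᵥ (N *ᵥ w) := by
    have := hN.posSemidef.dotProduct_mulVec_nonneg w
    rwa [show star w = w from funext fun i => by simp] at this
  have hexp : v ⬝ᵥ (N *ᵥ v) = schur N S e + w ⬝ᵥ (N *ᵥ w) := by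
    rw [hve, Matrix.mulVec_add, dotProduct_add, add_dotProduct,
      add_dotProduct, quad_vstar hN S e he, hcross, hcross2]
    ring
  linarith

lemma one_le_quad (K : Matrix V V ℝ) (hK : K.PosSemidef) (c : ℝ) (hc : 0 ≤ c)
    (e : V) (v : V → ℝ) (hv : v e = 1) : 1 ≤ v ⬝ᵥ ((1 + c • K) *ᵥ v) := by
  rw [Matrix.add_mulVec, Matrix.one_mulVec, dotProduct_add, smul_mulVec,
    dotProduct_smul]
  have h1 : (1 : ℝ) ≤ v ⬝ᵥ v := by
    have := Finset.single_le_sum (f := fun i => v i * v i)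
      (fun i _ => mul_self_nonneg (v i)) (Finset.mem_univ e)
    simpa [dotProduct, hv] using this
  have h2 : 0 ≤ v ⬝ᵥ (K *ᵥ v) := by
    have := hK.dotProduct_mulVec_nonneg v
    rwa [show star v = v from funext fun i => by simp] at this
  have h3 : 0 ≤ c * (v ⬝ᵥ (K *ᵥ v)) := mul_nonneg hc h2
  simp only [smul_eq_mul]
  linarith

end IVMaux

open IVMaux

/-- The Informative Vector Machine utility
`f(S) = (1/2)·log det(I + σ⁻²·K_{S,S})` for a positive semidefinite kernel matrix `K`
and `σ > 0` is normalized, monotone and submodular. -/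
theorem ivm_normalized_monotone_submodular
    {V : Type*} [Fintype V] [DecidableEq V]
    (K : Matrix V V ℝ) (hK : K.PosSemidef) (σ : ℝ) (hσ : 0 < σ)
    (f : Finset V → ℝ)
    (hf : ∀ S : Finset V, f S =
      (1 / 2) * Real.log
        ((1 + (σ ^ 2)⁻¹ •
            K.submatrix (fun i : {x // x ∈ S} => (i : V)) (fun i : {x // x ∈ S} => (i : V))).det)) :
    f ∅ = 0 ∧ IsMonotoneFn f ∧ IsSubmodularFn f := by
  classical
  set c : ℝ := (σ ^ 2)⁻¹ with hc_def
  have hc : 0 ≤ c := inv_nonneg.mpr (sq_nonneg σ)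
  set N : Matrix V V ℝ := 1 + c • K with hN_def
  have hcK : (c • K).PosSemidef := by
    refine Matrix.posSemidef_iff_dotProduct_mulVec.mpr ⟨?_, ?_⟩
    · show (c • K)ᴴ = c • K
      rw [Matrix.conjTranspose_smul, star_trivial, hK.1]
    · intro x
      rw [smul_mulVec, dotProduct_smul, smul_eq_mul]
      exact mul_nonneg hc (hK.dotProduct_mulVec_nonneg x)
  have hNPD : N.PosDef := Matrix.PosDef.add_posSemidef Matrix.PosDef.one hcK
  have hsubN : ∀ S : Finset V, sub N S =
      1 + c • K.submatrix (fun i : {x // x ∈ S} => (i : V)) (fun i : {x // x ∈ S} => (i : V)) := by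
    intro S
    rw [hN_def]
    unfold IVMaux.sub
    rw [Matrix.submatrix_add, Matrix.submatrix_smul]
    congr 1
    ext i j
    rw [Pi.add_apply, Pi.add_apply, Pi.smul_apply, Pi.smul_apply, Matrix.submatrix_one (α := ℝ) _ Subtype.val_injective]
  have hfN : ∀ S : Finset V, f S = (1 / 2) * Real.log ((sub N S).det) := by
    intro S
    rw [hf S, hsubN S]
  have hdet_pos : ∀ S : Finset V, 0 < (sub N S).det := fun S => (posDef_sub hNPD S).det_pos
  have hschur1 : ∀ (S : Finset V) (e : V), e ∉ S → 1 ≤ schur N S e := by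
    intro S e he
    rw [← quad_vstar hNPD S e he]
    exact one_le_quad K hK c hc e (vstar N S e) (vstar_apply_e N S e he)
  have hmarg : ∀ (S : Finset V) (e : V), e ∉ S →
      marginal f e S = (1 / 2) * Real.log (schur N S e) := by
    intro S e he
    have hspos : 0 < schur N S e := lt_of_lt_of_le one_pos (hschur1 S e he)
    rw [marginal, hfN, hfN, det_insert hNPD S e he,
      Real.log_mul (hdet_pos S).ne' hspos.ne']
    ring
  have hmono : IsMonotoneFn f := by
    have hstep : ∀ (e : V) (S : Finset V), f S ≤ f (insert e S) := by
      intro e S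
      by_cases he : e ∈ S
      · rw [Finset.insert_eq_self.mpr he]
      · have h1 := hschur1 S e he
        have h2 : 0 ≤ marginal f e S := by
          rw [hmarg S e he]
          exact mul_nonneg (by norm_num) (Real.log_nonneg h1)
        rw [marginal] at h2
        linarith
    have hun : ∀ T S : Finset V, f S ≤ f (S ∪ T) := by
      intro T
      induction T using Finset.induction_on with
      | empty => intro S; simp
      | insert _ _ ha ih =>
        intro S
        rw [Finset.union_insert]
        exact le_trans (ih S) (hstep _ _)
    intro A B hAB
    have := hun B A
    rwa [Finset.union_eq_right.mpr hAB] at this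
  refine ⟨?_, hmono, ?_⟩
  · rw [hfN]
    haveI : IsEmpty {x // x ∈ (∅ : Finset V)} := ⟨fun x => absurd x.2 (Finset.notMem_empty _)⟩
    rw [Matrix.det_isEmpty]
    simp
  · intro A B hAB e heB
    have heA : e ∉ A := fun h => heB (hAB h)
    rw [hmarg B e heB, hmarg A e heA]
    have hanti : schur N B e ≤ schur N A e := by
      rw [← quad_vstar hNPD A e heA]
      exact schur_le_quad hNPD B e heB (vstar N A e) (vstar_apply_e N A e heA)
        (fun x hx1 hx2 => vstar_apply_not_mem N A e x hx1 (fun h => hx2 (hAB h)))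
    have hBpos : 0 < schur N B e := lt_of_lt_of_le one_pos (hschur1 B e heB)
    have hApos : 0 < schur N A e := lt_of_lt_of_le hBpos hanti
    exact mul_le_mul_of_nonneg_left
      ((Real.log_le_log_iff hBpos hApos).mpr hanti) (by norm_num)
end

section
/- Key step in the proof of Claim 1, part 2: Suppose b(v_π) = false. Then every member of the family F(π, b) other than the singletons from item (iv) is disjoint from the set {v_π} × Fin ℓ (the leaf-block of the π-path leaf). Consequently, each of the ℓ points (v_π, i), i ∈ Fin ℓ, can only be covered by its own singleton {(v_π, i)}, which belongs to F(π, b). -/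
/-- The cylinder of a word `w` over `Fin t` in the universe
`X = (Fin (k−1) → Fin t) × Fin l`: the pairs `(x, i)` such that the leaf `x` agrees
with `w` on the first `length w` coordinates. -/
def cylX (k t l : ℕ) (w : List (Fin t)) : Set ((Fin (k - 1) → Fin t) × Fin l) :=
  {p | ∀ i : Fin (k - 1), ∀ h : (i : ℕ) < w.length, p.1 i = w.get ⟨i, h⟩}

/-- The `π`-path words: `w_0 = []` and `w_{i+1} = w_i ++ [π(w_i)]`. -/
def pathWord {t : ℕ} (π : List (Fin t) → Fin t) : ℕ → List (Fin t)
  | 0 => []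
  | i + 1 => pathWord π i ++ [π (pathWord π i)]

/-- The leaf `v_π` determined by the `π`-path: `v_π(i) = π(w_i)`. -/
def pathLeaf (k t : ℕ) (π : List (Fin t) → Fin t) : Fin (k - 1) → Fin t :=
  fun i => π (pathWord π (i : ℕ))

/-- The set family `F(π, b)`: (i) the root set `X \ C([π([])])`; (ii) the sets
`C(w) \ C(w ++ [π(w)])` for words `w` with `1 ≤ |w| ≤ k−2`; (iii) the leaf cylinders `C(x)`
for leaves `x` with `b(x) = true`; (iv) the singletons `{e}` for `e ∈ C([π([])])`. -/
def coverFamily (k t l : ℕ) (π : List (Fin t) → Fin t)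
    (b : (Fin (k - 1) → Fin t) → Bool) : Set (Set ((Fin (k - 1) → Fin t) × Fin l)) :=
  {S | S = Set.univ \ cylX k t l [π []]} ∪
  {S | ∃ w : List (Fin t), 1 ≤ w.length ∧ w.length ≤ k - 2 ∧
        S = cylX k t l w \ cylX k t l (w ++ [π w])} ∪
  {S | ∃ x : Fin (k - 1) → Fin t, b x = true ∧ S = cylX k t l (List.ofFn x)} ∪
  {S | ∃ e ∈ cylX k t l [π []], S = {e}}

/-! The leaf `v_π` lies in the cylinder of every `π`-path word, and a word of length at most
`k - 1` whose cylinder meets the block `{v_π} × Fin l` must itself be a `π`-path word `w_n`; then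
`w ++ [π w] = w_{n+1}` and the block also lies in `C(w ++ [π w])`. So the block misses the root set
and every set of type (ii), and it misses every leaf cylinder of type (iii) because `b(v_π) = false`. -/

section PathLeaf

variable {k t l : ℕ} {π : List (Fin t) → Fin t}

@[simp]
lemma length_pathWord (π : List (Fin t) → Fin t) (n : ℕ) : (pathWord π n).length = n := by
  induction n with
  | zero => rfl
  | succ n ih => simp [pathWord, ih]

lemma getElem_pathWord (n i : ℕ) (h : i < (pathWord π n).length) :
    (pathWord π n)[i] = π (pathWord π i) := by
  induction n with
  | zero => simp at h
  | succ n ih =>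
    simp only [pathWord, List.getElem_append, length_pathWord]
    split_ifs with hi
    · exact ih (by simpa using hi)
    · simp [show i = n by simp at h; omega]

lemma pathLeaf_mem_cylX_pathWord (n : ℕ) (j : Fin l) :
    (pathLeaf k t π, j) ∈ cylX k t l (pathWord π n) :=
  fun i h => (getElem_pathWord n i h).symm

lemma eq_pathWord_of_pathLeaf_mem_cylX {w : List (Fin t)} (hw : w.length ≤ k - 1) {j : Fin l}
    (h : (pathLeaf k t π, j) ∈ cylX k t l w) : w = pathWord π w.length := by
  refine List.ext_getElem (length_pathWord π _).symm fun i hi _ => ?_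
  rw [getElem_pathWord]
  exact (h ⟨i, hi.trans_le hw⟩ hi).symm

lemma pathLeaf_mem_cylX_append {w : List (Fin t)} (hw : w.length ≤ k - 1) {j : Fin l}
    (h : (pathLeaf k t π, j) ∈ cylX k t l w) : (pathLeaf k t π, j) ∈ cylX k t l (w ++ [π w]) := by
  rw [eq_pathWord_of_pathLeaf_mem_cylX hw h]
  exact pathLeaf_mem_cylX_pathWord (w.length + 1) j

lemma pathLeaf_mem_cylX_root (j : Fin l) : (pathLeaf k t π, j) ∈ cylX k t l [π []] :=
  pathLeaf_mem_cylX_pathWord 1 j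

end PathLeaf

lemma eq_of_mem_cylX_ofFn {k t l : ℕ} {x : Fin (k - 1) → Fin t} {p : (Fin (k - 1) → Fin t) × Fin l}
    (h : p ∈ cylX k t l (List.ofFn x)) : p.1 = x :=
  funext fun i => by simpa using h i (by simp)

lemma pathLeaf_notMem_of_mem_coverFamily {k t l : ℕ} {π : List (Fin t) → Fin t}
    {b : (Fin (k - 1) → Fin t) → Bool} (hb : b (pathLeaf k t π) = false)
    {S : Set ((Fin (k - 1) → Fin t) × Fin l)} (hS : S ∈ coverFamily k t l π b)
    (hS_singleton : ¬ ∃ e ∈ cylX k t l [π []], S = {e}) (j : Fin l) :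
    (pathLeaf k t π, j) ∉ S := by
  rcases hS with ((rfl | ⟨w, -, hw, rfl⟩) | ⟨x, hx, rfl⟩) | hS
  · exact fun h => h.2 (pathLeaf_mem_cylX_root j)
  · exact fun h => h.2 (pathLeaf_mem_cylX_append (hw.trans (by omega)) h.1)
  · intro h
    rw [← eq_of_mem_cylX_ofFn h, hb] at hx
    exact Bool.false_ne_true hx
  · exact absurd hS hS_singleton

theorem leaf_block_only_covered_by_singletons_general
    (k t l : ℕ)
    (π : List (Fin t) → Fin t) (b : (Fin (k - 1) → Fin t) → Bool)
    (hb : b (pathLeaf k t π) = false) :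
    (∀ S ∈ coverFamily k t l π b,
        (¬ ∃ e ∈ cylX k t l [π []], S = {e}) →
        S ∩ ({pathLeaf k t π} ×ˢ (Set.univ : Set (Fin l))) = ∅) ∧
    (∀ i : Fin l,
        ({(pathLeaf k t π, i)} : Set ((Fin (k - 1) → Fin t) × Fin l)) ∈ coverFamily k t l π b ∧
        ∀ S ∈ coverFamily k t l π b, (pathLeaf k t π, i) ∈ S →
          S = {(pathLeaf k t π, i)}) := by
  refine ⟨fun S hS hS_singleton => ?_, fun i => ⟨?_, fun S hS hi => ?_⟩⟩
  · refine Set.eq_empty_iff_forall_notMem.mpr ?_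
    rintro ⟨x, j⟩ ⟨hxS, rfl : x = pathLeaf k t π, -⟩
    exact pathLeaf_notMem_of_mem_coverFamily hb hS hS_singleton j hxS
  · exact Or.inr ⟨_, pathLeaf_mem_cylX_root i, rfl⟩
  · obtain ⟨e, -, rfl⟩ : ∃ e ∈ cylX k t l [π []], S = {e} :=
      by_contra fun hS_singleton => pathLeaf_notMem_of_mem_coverFamily hb hS hS_singleton i hi
    rw [Set.mem_singleton_iff.mp hi]

/-- Key step in the proof of Claim 1, part 2: if `b(v_π) = false`, then every member of
`F(π, b)` other than a singleton from item (iv) is disjoint from the leaf-block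
`{v_π} × Fin l`; consequently each point `(v_π, i)` can only be covered by its own
singleton `{(v_π, i)}`, which belongs to `F(π, b)`. -/
theorem leaf_block_only_covered_by_singletons
    (k t l : ℕ) (hk : 2 ≤ k) (ht : 1 ≤ t) (hl : 1 ≤ l)
    (π : List (Fin t) → Fin t) (b : (Fin (k - 1) → Fin t) → Bool)
    (hb : b (pathLeaf k t π) = false) :
    (∀ S ∈ coverFamily k t l π b,
        (¬ ∃ e ∈ cylX k t l [π []], S = {e}) →
        S ∩ ({pathLeaf k t π} ×ˢ (Set.univ : Set (Fin l))) = ∅) ∧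
    (∀ i : Fin l,
        ({(pathLeaf k t π, i)} : Set ((Fin (k - 1) → Fin t) × Fin l)) ∈ coverFamily k t l π b ∧
        ∀ S ∈ coverFamily k t l π b, (pathLeaf k t π, i) ∈ S →
          S = {(pathLeaf k t π, i)}) :=
  leaf_block_only_covered_by_singletons_general k t l π b hb
end

section
/- Claim 1, part 1 of the paper: If b(v_π) = true, then there exists a subfamily F' ⊆ F(π, b) of cardinality at most k whose union is all of X. (Namely, one can take the root set X \ C(w_1), the sets C(w_i) \ C(w_{i+1}) for 1 ≤ i ≤ k−2, and the leaf set C(w_{k−1}) = {v_π} × Fin ℓ.) -/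
/-!
A point of `X` either follows the whole `π`-path, i.e. lies in `C(w_{k-1}) = C(v_π)`, which is
in the family because `b(v_π) = true`, or leaves it at a first index `m < k - 1`, i.e. lies in
`C(w_m) \ C(w_{m+1})`; for `m = 0` this is the root set, as `C(w_0) = X`.
-/

open Set

lemma subset_union_iUnion_diff_succ {α : Type*} (s : ℕ → Set α) (n : ℕ) :
    s 0 ⊆ s n ∪ ⋃ m ∈ Iio n, s m \ s (m + 1) := by
  induction n with
  | zero => exact subset_union_left
  | succ n ih =>
    intro p hp
    rcases ih hp with hpn | hpm
    · by_cases hp' : p ∈ s (n + 1)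
      · exact Or.inl hp'
      · exact Or.inr (mem_biUnion n.lt_succ_self ⟨hpn, hp'⟩)
    · exact Or.inr (biUnion_mono (fun m hm ↦ hm.trans n.lt_succ_self) (fun _ _ ↦ subset_rfl) hpm)

lemma cylX_nil (k t l : ℕ) : cylX k t l [] = univ := by
  ext p
  simp [cylX]

lemma pathWord_eq_ofFn {t : ℕ} (π : List (Fin t) → Fin t) (n : ℕ) :
    pathWord π n = List.ofFn fun i : Fin n ↦ π (pathWord π i) := by
  induction n with
  | zero => rfl
  | succ n ih =>
    rw [List.ofFn_succ', List.concat_eq_append]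
    simp only [Fin.val_castSucc, Fin.val_last, ← ih]
    rfl

lemma pathWord_length {t : ℕ} (π : List (Fin t) → Fin t) (n : ℕ) :
    (pathWord π n).length = n := by
  rw [pathWord_eq_ofFn, List.length_ofFn]

lemma cylX_pathWord_mem_coverFamily {k t l : ℕ} {π : List (Fin t) → Fin t}
    {b : (Fin (k - 1) → Fin t) → Bool} (hb : b (pathLeaf k t π) = true) :
    cylX k t l (pathWord π (k - 1)) ∈ coverFamily k t l π b :=
  Or.inl <| Or.inr ⟨pathLeaf k t π, hb, by rw [pathWord_eq_ofFn]; rfl⟩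

lemma cylX_pathWord_diff_mem_coverFamily {k t l : ℕ} (π : List (Fin t) → Fin t)
    (b : (Fin (k - 1) → Fin t) → Bool) {m : ℕ} (hm : m < k - 1) :
    cylX k t l (pathWord π m) \ cylX k t l (pathWord π (m + 1)) ∈ coverFamily k t l π b := by
  rcases Nat.eq_zero_or_pos m with rfl | hm0
  · exact Or.inl <| Or.inl <| Or.inl <| by rw [← cylX_nil k t l]; rfl
  · exact Or.inl <| Or.inl <| Or.inr
      ⟨pathWord π m, by rw [pathWord_length]; omega, by rw [pathWord_length]; omega, rfl⟩

theorem cover_of_bit_true_general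
    (k t l : ℕ) (hk : 2 ≤ k)
    (π : List (Fin t) → Fin t) (b : (Fin (k - 1) → Fin t) → Bool)
    (hb : b (pathLeaf k t π) = true) :
    ∃ F' : Set (Set ((Fin (k - 1) → Fin t) × Fin l)),
      F' ⊆ coverFamily k t l π b ∧ F'.Finite ∧ F'.ncard ≤ k ∧ ⋃₀ F' = Set.univ := by
  set C : ℕ → Set ((Fin (k - 1) → Fin t) × Fin l) := fun n ↦ cylX k t l (pathWord π n)
  refine ⟨insert (C (k - 1)) ((fun m ↦ C m \ C (m + 1)) '' Iio (k - 1)), ?_, ?_, ?_, ?_⟩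
  · exact insert_subset (cylX_pathWord_mem_coverFamily hb) <| image_subset_iff.2
      fun m hm ↦ cylX_pathWord_diff_mem_coverFamily π b hm
  · exact ((finite_Iio _).image _).insert _
  · calc _ ≤ ((fun m ↦ C m \ C (m + 1)) '' Iio (k - 1)).ncard + 1 := ncard_insert_le _ _
      _ ≤ (Iio (k - 1)).ncard + 1 := by gcongr; exact ncard_image_le (finite_Iio _)
      _ = k := by rw [ncard_Iio_nat]; omega
  · have hC0 : C 0 = univ := cylX_nil k t l
    rw [sUnion_insert, sUnion_image, ← univ_subset_iff, ← hC0]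
    exact subset_union_iUnion_diff_succ C (k - 1)

/-- Claim 1, part 1 of the paper: if `b(v_π) = true`, then some subfamily of `F(π, b)`
of cardinality at most `k` covers all of `X`. -/
theorem cover_of_bit_true
    (k t l : ℕ) (hk : 2 ≤ k) (ht : 1 ≤ t) (hl : 1 ≤ l)
    (π : List (Fin t) → Fin t) (b : (Fin (k - 1) → Fin t) → Bool)
    (hb : b (pathLeaf k t π) = true) :
    ∃ F' : Set (Set ((Fin (k - 1) → Fin t) × Fin l)),
      F' ⊆ coverFamily k t l π b ∧ F'.Finite ∧ F'.ncard ≤ k ∧ ⋃₀ F' = Set.univ :=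
  cover_of_bit_true_general k t l hk π b hb
end

section
/- Size of the constructed stream (displayed inequality in Section 5.2 of the paper): For t ≥ 2, the total number of distinct sets in the family F(π, b) satisfies |F(π, b)| ≤ t^{k−1} + Σ_{i=2}^{k−1} t^{k−i} + ℓ·t^{k−2} + 1, and hence (t − 1)·|F(π, b)| ≤ t^k − 1 + ℓ·t^{k−2}·(t − 1). -/
theorem List.ncard_setOf_length_eq (α : Type*) [Fintype α] (n : ℕ) :
    {w : List α | w.length = n}.ncard = Fintype.card α ^ n := by
  rw [← Nat.card_coe_set_eq]
  exact (Nat.card_eq_fintype_card (α := List.Vector α n)).trans (card_vector n)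

theorem List.ncard_image_setOf_length_mem_Ico_le {α β : Type*} [Fintype α] (f : List α → β)
    (a b : ℕ) :
    (f '' {w | a ≤ w.length ∧ w.length < b}).ncard ≤
      ∑ n ∈ Finset.Ico a b, Fintype.card α ^ n := by
  have hwords : {w : List α | a ≤ w.length ∧ w.length < b} =
      ⋃ n ∈ Finset.Ico a b, {w | w.length = n} := by
    ext; simp
  rw [hwords, Set.image_iUnion₂]
  refine (Finset.set_ncard_biUnion_le _ _).trans (Finset.sum_le_sum fun n _ => ?_)
  calc (f '' {w | w.length = n}).ncard ≤ {w : List α | w.length = n}.ncard :=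
        Set.ncard_image_le (List.finite_length_eq α n)
    _ = Fintype.card α ^ n := List.ncard_setOf_length_eq α n

theorem ncard_cylX_singleton (n t l : ℕ) (a : Fin t) :
    (cylX (n + 2) t l [a]).ncard = t ^ n * l := by
  have hrange : cylX (n + 2) t l [a] =
      Set.range (Prod.map (fun y : Fin n → Fin t => (Fin.cons a y : Fin (n + 1) → Fin t)) id) := by
    ext ⟨x, i⟩
    constructor
    · intro hx
      have hx₀ : x ⟨0, Nat.succ_pos n⟩ = a := hx ⟨0, Nat.succ_pos n⟩ Nat.zero_lt_one
      refine ⟨(Fin.tail x, i), Prod.ext ?_ rfl⟩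
      rw [← hx₀]
      exact Fin.cons_self_tail x
    · rintro ⟨⟨y, i⟩, hxy⟩ j hj
      obtain rfl : j = ⟨0, Nat.succ_pos n⟩ := Fin.ext (Nat.lt_one_iff.mp hj)
      simp only [Prod.map, Prod.mk.injEq] at hxy
      rw [← hxy.1]
      rfl
  have hinj : Function.Injective
      (Prod.map (fun y : Fin n → Fin t => (Fin.cons a y : Fin (n + 1) → Fin t)) (@id (Fin l))) :=
    (Fin.cons_right_injective (α := fun _ : Fin (n + 1) => Fin t) a).prodMap Function.injective_id
  rw [hrange, Set.ncard_range_of_injective hinj]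
  simp

theorem coverFamily_ncard_le (k t l : ℕ) (π : List (Fin t) → Fin t)
    (b : (Fin (k - 1) → Fin t) → Bool) :
    (coverFamily k t l π b).ncard ≤
      1 + ∑ n ∈ Finset.Ico 1 (k - 1), t ^ n + t ^ (k - 1) + (cylX k t l [π []]).ncard := by
  have hroot : {S | S = Set.univ \ cylX k t l [π []]}.ncard = 1 := Set.ncard_singleton _
  have hinner : {S | ∃ w : List (Fin t), 1 ≤ w.length ∧ w.length ≤ k - 2 ∧
      S = cylX k t l w \ cylX k t l (w ++ [π w])}.ncard ≤ ∑ n ∈ Finset.Ico 1 (k - 1), t ^ n := by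
    set f := fun w => cylX k t l w \ cylX k t l (w ++ [π w])
    calc _ ≤ (f '' {w | 1 ≤ w.length ∧ w.length < k - 1}).ncard := by
          refine Set.ncard_le_ncard ?_
          rintro S ⟨w, hw₁, hw₂, rfl⟩
          exact ⟨w, ⟨hw₁, by omega⟩, rfl⟩
      _ ≤ _ := by simpa using List.ncard_image_setOf_length_mem_Ico_le f 1 (k - 1)
  have hleaf : {S | ∃ x : Fin (k - 1) → Fin t, b x = true ∧
      S = cylX k t l (List.ofFn x)}.ncard ≤ t ^ (k - 1) := by
    calc _ ≤ ((fun x => cylX k t l (List.ofFn x)) '' Set.univ).ncard := by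
          refine Set.ncard_le_ncard ?_
          rintro S ⟨x, -, rfl⟩
          exact ⟨x, trivial, rfl⟩
      _ ≤ (Set.univ : Set (Fin (k - 1) → Fin t)).ncard := Set.ncard_image_le
      _ = t ^ (k - 1) := by simp
  have hsingle : {S : Set ((Fin (k - 1) → Fin t) × Fin l) |
      ∃ e ∈ cylX k t l [π []], S = {e}}.ncard ≤ (cylX k t l [π []]).ncard := by
    calc _ ≤ ((fun e => ({e} : Set _)) '' cylX k t l [π []]).ncard := by
          refine Set.ncard_le_ncard ?_
          rintro S ⟨e, he, rfl⟩
          exact ⟨e, he, rfl⟩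
      _ ≤ _ := Set.ncard_image_le
  unfold coverFamily
  grw [Set.ncard_union_le, Set.ncard_union_le, Set.ncard_union_le]
  omega

theorem Finset.sum_Icc_two_sub_eq_sum_Ico {M : Type*} [AddCommMonoid M] (f : ℕ → M) (k : ℕ) :
    ∑ i ∈ Finset.Icc 2 (k - 1), f (k - i) = ∑ i ∈ Finset.Ico 1 (k - 1), f i := by
  have hIcc : Finset.Icc 2 (k - 1) = Finset.Ico 2 k := by
    ext; simp only [Finset.mem_Icc, Finset.mem_Ico]; omega
  rw [hIcc, Finset.sum_Ico_reflect f 2 (Nat.le_succ k), Nat.add_sub_cancel_left]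
  rfl

theorem one_add_sum_Ico_add_pow_eq_sum_range (t n : ℕ) :
    1 + ∑ i ∈ Finset.Ico 1 (n + 1), t ^ i + t ^ (n + 1) = ∑ i ∈ Finset.range (n + 2), t ^ i := by
  rw [Finset.sum_range_succ, Finset.range_eq_Ico, Finset.sum_eq_sum_Ico_succ_bot n.succ_pos,
    pow_zero]

theorem coverFamily_size_bound_general
    (k t l : ℕ) (hk : 2 ≤ k) (ht : 2 ≤ t)
    (π : List (Fin t) → Fin t) (b : (Fin (k - 1) → Fin t) → Bool) :
    (coverFamily k t l π b).ncard ≤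
        t ^ (k - 1) + (∑ i ∈ Finset.Icc 2 (k - 1), t ^ (k - i)) + l * t ^ (k - 2) + 1 ∧
      (t - 1) * (coverFamily k t l π b).ncard ≤ t ^ k - 1 + l * t ^ (k - 2) * (t - 1) := by
  rw [Finset.sum_Icc_two_sub_eq_sum_Ico (t ^ ·) k]
  obtain ⟨n, rfl⟩ : ∃ n, k = n + 2 := ⟨k - 2, by omega⟩
  have hcount := coverFamily_ncard_le (n + 2) t l π b
  rw [ncard_cylX_singleton] at hcount
  have hgeom := one_add_sum_Ico_add_pow_eq_sum_range t n
  simp only [Nat.reduceSubDiff, Nat.add_sub_cancel] at hcount ⊢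
  refine ⟨by linarith, ?_⟩
  calc (t - 1) * (coverFamily (n + 2) t l π b).ncard
      ≤ (t - 1) * (∑ i ∈ Finset.range (n + 2), t ^ i + t ^ n * l) := by gcongr; omega
    _ = (∑ i ∈ Finset.range (n + 2), t ^ i) * (t - 1) + l * t ^ n * (t - 1) := by ring
    _ = t ^ (n + 2) - 1 + l * t ^ n * (t - 1) := by rw [geom_sum_mul_of_one_le (by omega)]

/-- Size of the constructed stream (Section 5.2): the number of distinct sets in `F(π, b)`
is at most `t^{k−1} + Σ_{i=2}^{k−1} t^{k−i} + l·t^{k−2} + 1`, and hence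
`(t − 1)·|F(π, b)| ≤ t^k − 1 + l·t^{k−2}·(t − 1)`. -/
theorem coverFamily_size_bound
    (k t l : ℕ) (hk : 2 ≤ k) (ht : 2 ≤ t) (hl : 1 ≤ l)
    (π : List (Fin t) → Fin t) (b : (Fin (k - 1) → Fin t) → Bool) :
    (coverFamily k t l π b).ncard ≤
        t ^ (k - 1) + (∑ i ∈ Finset.Icc 2 (k - 1), t ^ (k - i)) + l * t ^ (k - 2) + 1 ∧
      (t - 1) * (coverFamily k t l π b).ncard ≤ t ^ k - 1 + l * t ^ (k - 2) * (t - 1) :=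
  coverFamily_size_bound_general k t l hk ht π b
end
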